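/- Let Q(ℓ,w) and Q̃(ℓ,w), 0 ≤ w ≤ ℓ, be two families of row-substochastic real 𝒥×𝒥 matrices with recursions Π and Π̃, and let C_k be as in the comparison lemma (C_0 = 0 and C_k = sup{ Σ_{j∈𝒥} |Q_{ij}(ℓ,w) − Q̃_{ij}(ℓ,w)| : 0 ≤ w ≤ ℓ ≤ k−1, i ∈ 𝒥 } for k ≥ 1). Then for every γ > 0, all 0 ≤ v ≤ s, every i ∈ 𝒥 and every integer N ≥ 0, ∫_0^v Σ_{j∈𝒥} |p^c_{ij}(s,v') − p̃^c_{ij}(s,v')| dv' ≤ γ s · C_N + 2 Σ_{ℓ ≥ N+1} Poi_{γs}(ℓ). -/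

import Mathlib

open scoped BigOperators

noncomputable section

/-- The diagonal part of a matrix. -/
def diagPart {J : Type*} [DecidableEq J] (M : Matrix J J ℝ) : Matrix J J ℝ :=
  Matrix.of fun i j => if i = j then M i j else 0

/-- The off-diagonal part of a matrix. -/
def offdiagPart {J : Type*} [DecidableEq J] (M : Matrix J J ℝ) : Matrix J J ℝ :=
  M - diagPart M

/-- A matrix is row-substochastic if its entries are nonnegative and every row sum is ≤ 1. -/
def RowSubstochastic {J : Type*} [Fintype J] (M : Matrix J J ℝ) : Prop :=
  (∀ i j, 0 ≤ M i j) ∧ ∀ i, ∑ j, M i j ≤ 1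

/-- A matrix is row-stochastic if its entries are nonnegative and every row sum equals 1. -/
def RowStochastic {J : Type*} [Fintype J] (M : Matrix J J ℝ) : Prop :=
  (∀ i j, 0 ≤ M i j) ∧ ∀ i, ∑ j, M i j = 1

/-- The matrices `Π(k,v)` produced by the recursion from the family `Q(ℓ,w)`:
`Π(0,0) = I`, `Π(k,v) = 0` for `v > k`,
`Π(k,0) = ∑_{k'=0}^{k-1} Π(k-1,k') Qⁿ(k-1,k')` for `k ≥ 1`, and
`Π(k,v) = Π(k-1,v-1) Q^d(k-1,v-1)` for `k ≥ v ≥ 1`. -/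
def PiRec {J : Type*} [Fintype J] [DecidableEq J]
    (Q : ℕ → ℕ → Matrix J J ℝ) : ℕ → ℕ → Matrix J J ℝ
  | 0, v => if v = 0 then 1 else 0
  | (k+1), v =>
      if v = 0 then ∑ k' ∈ Finset.range (k+1), PiRec Q k k' * offdiagPart (Q k k')
      else if v ≤ k + 1 then PiRec Q k (v-1) * diagPart (Q k (v-1)) else 0

/-- `C_k`: `C_0 = 0` and, for `k ≥ 1`,
`C_k = sup { ∑_j |Q_{ij}(ℓ,w) − Q̃_{ij}(ℓ,w)| : 0 ≤ w ≤ ℓ ≤ k−1, i ∈ 𝒥 }`. -/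
def Cconst {J : Type*} [Fintype J] (Q Q' : ℕ → ℕ → Matrix J J ℝ) (k : ℕ) : ℝ :=
  sSup {x : ℝ | ∃ ℓ w, ∃ i : J, w ≤ ℓ ∧ ℓ < k ∧ x = ∑ j, |Q ℓ w i j - Q' ℓ w i j|}

/-- `Poi_λ(k) = e^{−λ} λ^k / k!`. -/
def Poi (lam : ℝ) (k : ℕ) : ℝ := Real.exp (-lam) * lam ^ k / (Nat.factorial k)

/-- `Erl_{k,γ}(x) = γ (γx)^{k−1} e^{−γx} / (k−1)!` (intended for `k ≥ 1`). -/
def Erl (k : ℕ) (γ x : ℝ) : ℝ :=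
  γ * (γ * x) ^ (k - 1) * Real.exp (-(γ * x)) / (Nat.factorial (k - 1))

/-- Atomic part of the approximate transition probabilities:
`p^a_{ij}(s) = 1_{i=j} ∑_{ℓ≥0} Poi_{γs}(ℓ) Π_{ii}(ℓ,ℓ)`. -/
def pAtom {J : Type*} [Fintype J] [DecidableEq J] (γ : ℝ)
    (Pi : ℕ → ℕ → Matrix J J ℝ) (s : ℝ) (i j : J) : ℝ :=
  (if i = j then 1 else 0) * ∑' ℓ : ℕ, Poi (γ * s) ℓ * Pi ℓ ℓ i i

/-- Absolutely continuous part of the approximate transition probabilities: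
`p^c_{ij}(s,v) = ∑_{ℓ≥1} ∑_{w=0}^{ℓ−1} Erl_{ℓ−w,γ}(s−v) Poi_{γv}(w) Π_{ij}(ℓ,w)`. -/
def pCont {J : Type*} [Fintype J] (γ : ℝ)
    (Pi : ℕ → ℕ → Matrix J J ℝ) (s v : ℝ) (i j : J) : ℝ :=
  ∑' ℓ : ℕ, ∑ w ∈ Finset.range ℓ, Erl (ℓ - w) γ (s - v) * Poi (γ * v) w * Pi ℓ w i j


/-!
Both `p^c` and `p̃^c` are Erlang–Poisson mixtures of the entries of `Π(ℓ,w)` and `Π̃(ℓ,w)`, so at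
each time the row distance is bounded by the same mixture of `D(ℓ,w) = ∑ⱼ |Πᵢⱼ(ℓ,w) − Π̃ᵢⱼ(ℓ,w)|`.
The beta integral `∫₀ˢ Erl_{ℓ−w,γ}(s−x) Poi_{γx}(w) dx = Poi_{γs}(ℓ)` turns the time integral into
`∑_ℓ Poi_{γs}(ℓ) T_ℓ` with `T_ℓ = ∑_{w<ℓ} D(ℓ,w)`. Since the `Π` are substochastic, each step of
the recursion below level `N` adds at most `C_N` to the ℓ¹-distance of the rows, so `T_ℓ ≤ ℓ C_N`
for `ℓ ≤ N`; always `T_ℓ ≤ 2`. Splitting the Poisson sum at `N` and using `∑ ℓ Poi_{γs}(ℓ) ≤ γs` concludes.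
-/

open Finset
open scoped Nat

lemma Poi_nonneg {lam : ℝ} (h : 0 ≤ lam) (k : ℕ) : 0 ≤ Poi lam k := by
  unfold Poi; positivity

lemma Erl_nonneg {γ x : ℝ} (hγ : 0 ≤ γ) (hx : 0 ≤ x) (k : ℕ) : 0 ≤ Erl k γ x := by
  unfold Erl; positivity

lemma Erl_succ (k : ℕ) (γ x : ℝ) : Erl (k + 1) γ x = γ * Poi (γ * x) k := by
  unfold Erl Poi; rw [Nat.add_sub_cancel]; ring

lemma hasSum_Poi (lam : ℝ) : HasSum (Poi lam) 1 := by
  have h := (NormedSpace.expSeries_div_hasSum_exp lam).mul_left (Real.exp (-lam))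
  rw [← Real.exp_eq_exp_ℝ, ← Real.exp_add, neg_add_cancel, Real.exp_zero] at h
  have hPoi : Poi lam = fun k => Real.exp (-lam) * (lam ^ k / k !) := by
    funext k
    unfold Poi
    ring
  rwa [hPoi]

lemma summable_Poi (lam : ℝ) : Summable (Poi lam) := (hasSum_Poi lam).summable

lemma succ_mul_Poi_succ (lam : ℝ) (k : ℕ) : (k + 1 : ℝ) * Poi lam (k + 1) = lam * Poi lam k := by
  unfold Poi
  rw [Nat.factorial_succ, Nat.cast_mul, pow_succ]
  field_simp
  push_cast
  ring

lemma sum_range_mul_Poi_le {lam : ℝ} (hlam : 0 ≤ lam) (n : ℕ) :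
    ∑ ℓ ∈ range n, (ℓ : ℝ) * Poi lam ℓ ≤ lam := by
  cases n with
  | zero => simpa using hlam
  | succ n =>
    rw [sum_range_succ']
    push_cast
    simp only [succ_mul_Poi_succ, ← mul_sum, zero_mul, add_zero]
    exact mul_le_of_le_one_right hlam
      ((summable_Poi lam).sum_le_tsum _ (fun k _ => Poi_nonneg hlam k) |>.trans
        (hasSum_Poi lam).tsum_eq.le)

lemma sum_Poi_mul_Poi (α β : ℝ) (m : ℕ) :
    ∑ w ∈ range (m + 1), Poi α (m - w) * Poi β w = Poi (α + β) m := by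
  have hterm : ∀ w ∈ range (m + 1), Poi α (m - w) * Poi β w
      = Real.exp (-(α + β)) / m ! * (β ^ w * α ^ (m - w) * m.choose w) := by
    intro w hw
    have hwm : w ≤ m := Nat.lt_succ_iff.mp (mem_range.mp hw)
    have hfac : (m.choose w * w ! * (m - w) ! : ℝ) = m ! := by
      exact_mod_cast Nat.choose_mul_factorial_mul_factorial hwm
    have hchoose : (m.choose w : ℝ) ≠ 0 := by exact_mod_cast (Nat.choose_pos hwm).ne'
    unfold Poi
    rw [neg_add, Real.exp_add, ← hfac]
    field_simp
  rw [sum_congr rfl hterm, ← mul_sum, ← add_pow, add_comm β α]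
  unfold Poi
  ring

lemma sum_Erl_mul_Poi (γ s x : ℝ) (m : ℕ) :
    ∑ w ∈ range (m + 1), Erl (m + 1 - w) γ (s - x) * Poi (γ * x) w = γ * Poi (γ * s) m := by
  have hterm : ∀ w ∈ range (m + 1), Erl (m + 1 - w) γ (s - x) * Poi (γ * x) w
      = γ * (Poi (γ * (s - x)) (m - w) * Poi (γ * x) w) := by
    intro w hw
    rw [show m + 1 - w = m - w + 1 by have := mem_range.mp hw; omega, Erl_succ, mul_assoc]
  rw [sum_congr rfl hterm, ← mul_sum, sum_Poi_mul_Poi, ← mul_add, sub_add_cancel]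

lemma summable_sum_Erl_mul_Poi (γ s x : ℝ) :
    Summable fun ℓ => ∑ w ∈ range ℓ, Erl (ℓ - w) γ (s - x) * Poi (γ * x) w := by
  rw [← summable_nat_add_iff 1]
  exact ((summable_Poi (γ * s)).mul_left γ).congr fun m => (sum_Erl_mul_Poi γ s x m).symm

lemma integral_pow_div_factorial_mul_pow_div_factorial (s : ℝ) (k w : ℕ) :
    ∫ x in (0 : ℝ)..s, x ^ w / w ! * ((s - x) ^ k / k !) = s ^ (w + k + 1) / (w + k + 1)! := by
  induction k generalizing w with
  | zero => simp [integral_pow, Nat.factorial_succ, div_div]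
  | succ k ih =>
    have hu : ∀ x ∈ Set.uIcc (0 : ℝ) s,
        HasDerivAt (fun x : ℝ => x ^ (w + 1) / (w + 1)!) (x ^ w / w !) x := by
      intro x _
      refine ((hasDerivAt_pow (w + 1) x).div_const ((w + 1)! : ℝ)).congr_deriv ?_
      rw [Nat.factorial_succ, Nat.cast_mul]
      field_simp
      push_cast
      ring
    have hv : ∀ x ∈ Set.uIcc (0 : ℝ) s,
        HasDerivAt (fun x : ℝ => (s - x) ^ (k + 1) / (k + 1)!) (-((s - x) ^ k / k !)) x := by
      intro x _
      refine (((hasDerivAt_pow (k + 1) (s - x)).comp x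
        ((hasDerivAt_id x).const_sub s)).div_const ((k + 1)! : ℝ)).congr_deriv ?_
      rw [Nat.factorial_succ, Nat.cast_mul]
      field_simp
      push_cast
      ring
    have hu' : Continuous fun x : ℝ => x ^ w / w ! := by fun_prop
    have hv' : Continuous fun x : ℝ => -((s - x) ^ k / k !) := by fun_prop
    have hparts := intervalIntegral.integral_mul_deriv_eq_deriv_mul hu hv
      (hu'.intervalIntegrable 0 s) (hv'.intervalIntegrable 0 s)
    simp only [mul_neg, intervalIntegral.integral_neg, ih (w + 1), sub_self,
      zero_pow (Nat.succ_ne_zero _), zero_div, mul_zero, zero_mul, zero_sub,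
      neg_inj] at hparts
    rw [← hparts, show w + 1 + k + 1 = w + (k + 1) + 1 by ring]

lemma Erl_succ_mul_Poi (γ s x : ℝ) (k w : ℕ) :
    Erl (k + 1) γ (s - x) * Poi (γ * x) w
      = Real.exp (-(γ * s)) * γ ^ (w + k + 1) * (x ^ w / w ! * ((s - x) ^ k / k !)) := by
  have hexp : Real.exp (-(γ * (s - x))) * Real.exp (-(γ * x)) = Real.exp (-(γ * s)) := by
    rw [← Real.exp_add]; ring_nf
  rw [Erl_succ, ← hexp]
  unfold Poi
  rw [mul_pow, mul_pow]
  ring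

lemma integral_Erl_succ_mul_Poi (γ s : ℝ) (k w : ℕ) :
    ∫ x in (0 : ℝ)..s, Erl (k + 1) γ (s - x) * Poi (γ * x) w = Poi (γ * s) (w + k + 1) := by
  simp only [Erl_succ_mul_Poi, intervalIntegral.integral_const_mul,
    integral_pow_div_factorial_mul_pow_div_factorial]
  unfold Poi
  ring

lemma integral_Erl_succ_mul_Poi_le {γ v s : ℝ} (hγ : 0 ≤ γ) (hv : 0 ≤ v) (hvs : v ≤ s)
    (k w : ℕ) :
    ∫ x in (0 : ℝ)..v, Erl (k + 1) γ (s - x) * Poi (γ * x) w ≤ Poi (γ * s) (w + k + 1) := by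
  rw [← integral_Erl_succ_mul_Poi]
  refine intervalIntegral.integral_mono_interval le_rfl hv hvs ?_
    ((by unfold Erl Poi; fun_prop : Continuous fun x =>
      Erl (k + 1) γ (s - x) * Poi (γ * x) w).intervalIntegrable 0 s)
  filter_upwards [MeasureTheory.ae_restrict_mem measurableSet_Ioc] with x hx
  exact mul_nonneg (Erl_nonneg hγ (by linarith [hx.2]) _)
    (Poi_nonneg (mul_nonneg hγ hx.1.le) _)

section Integral

open MeasureTheory

variable {α ι : Type*} [MeasurableSpace α] [Countable ι] {μ : Measure α}

-- No measurability of `f` is needed: the bound is taken through `∫⁻ x, ‖f x‖`.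
lemma integral_le_tsum_of_abs_le_tsum {f : α → ℝ} {g : ι → α → ℝ} {b : ι → ℝ}
    (hg : ∀ n, Integrable (g n) μ) (hg_nonneg : ∀ n, 0 ≤ᵐ[μ] g n)
    (hfg : ∀ᵐ x ∂μ, |f x| ≤ ∑' n, g n x) (hgb : ∀ n, ∫ x, g n x ∂μ ≤ b n) (hb : Summable b) :
    ∫ x, f x ∂μ ≤ ∑' n, b n := by
  have hb_nonneg : ∀ n, 0 ≤ b n := fun n => (integral_nonneg_of_ae (hg_nonneg n)).trans (hgb n)
  have hpointwise : ∀ᵐ x ∂μ, ENNReal.ofReal ‖f x‖ ≤ ∑' n, ENNReal.ofReal (g n x) := by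
    filter_upwards [hfg, ae_all_iff.mpr hg_nonneg] with x hx hx0
    by_cases hs : Summable fun n => g n x
    · rw [← ENNReal.ofReal_tsum_of_nonneg hx0 hs]
      exact ENNReal.ofReal_le_ofReal hx
    · rw [tsum_eq_zero_of_not_summable hs, abs_nonpos_iff] at hx
      simp [hx]
  have hlintegral : ∫⁻ x, ENNReal.ofReal ‖f x‖ ∂μ ≤ ENNReal.ofReal (∑' n, b n) :=
    calc ∫⁻ x, ENNReal.ofReal ‖f x‖ ∂μ
        ≤ ∫⁻ x, ∑' n, ENNReal.ofReal (g n x) ∂μ := lintegral_mono_ae hpointwise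
      _ = ∑' n, ENNReal.ofReal (∫ x, g n x ∂μ) := by
        rw [lintegral_tsum fun n => (hg n).aemeasurable.ennreal_ofReal]
        exact tsum_congr fun n => (ofReal_integral_eq_lintegral_ofReal (hg n) (hg_nonneg n)).symm
      _ ≤ ∑' n, ENNReal.ofReal (b n) := ENNReal.tsum_le_tsum fun n => ENNReal.ofReal_le_ofReal (hgb n)
      _ = ENNReal.ofReal (∑' n, b n) := (ENNReal.ofReal_tsum_of_nonneg hb_nonneg hb).symm
  calc ∫ x, f x ∂μ ≤ ‖∫ x, f x ∂μ‖ := le_abs_self _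
    _ ≤ (∫⁻ x, ENNReal.ofReal ‖f x‖ ∂μ).toReal := norm_integral_le_lintegral_norm f
    _ ≤ ∑' n, b n := ENNReal.toReal_le_of_le_ofReal (tsum_nonneg hb_nonneg) hlintegral

end Integral

lemma abs_sub_le_add_of_nonneg {a b : ℝ} (ha : 0 ≤ a) (hb : 0 ≤ b) : |a - b| ≤ a + b :=
  abs_sub_le_iff.mpr ⟨by linarith, by linarith⟩

section MatrixParts

variable {J : Type*} [DecidableEq J]

lemma diagPart_apply (M : Matrix J J ℝ) (i j : J) :
    diagPart M i j = if i = j then M i j else 0 := rfl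

lemma offdiagPart_apply (M : Matrix J J ℝ) (i j : J) :
    offdiagPart M i j = if i = j then 0 else M i j := by
  simp only [offdiagPart, Matrix.sub_apply, diagPart_apply]
  split_ifs <;> ring

lemma diagPart_nonneg {M : Matrix J J ℝ} (hM : ∀ i j, 0 ≤ M i j) (i j : J) :
    0 ≤ diagPart M i j := by
  rw [diagPart_apply]
  split_ifs
  exacts [hM i j, le_rfl]

lemma offdiagPart_nonneg {M : Matrix J J ℝ} (hM : ∀ i j, 0 ≤ M i j) (i j : J) :
    0 ≤ offdiagPart M i j := by
  rw [offdiagPart_apply]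
  split_ifs
  exacts [le_rfl, hM i j]

end MatrixParts

section Matrix

variable {J : Type*} [Fintype J]

lemma RowSubstochastic.sum_abs_sub_le_two {M M' : Matrix J J ℝ} (hM : RowSubstochastic M)
    (hM' : RowSubstochastic M') (i : J) : ∑ j, |M i j - M' i j| ≤ 2 :=
  calc ∑ j, |M i j - M' i j| ≤ ∑ j, M i j + ∑ j, M' i j := by
        rw [← sum_add_distrib]
        exact sum_le_sum fun j _ => abs_sub_le_add_of_nonneg (hM.1 i j) (hM'.1 i j)
    _ ≤ 2 := by linarith [hM.2 i, hM'.2 i]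

lemma sum_mul_apply (A B : Matrix J J ℝ) (i : J) :
    ∑ j, (A * B) i j = ∑ m, A i m * ∑ j, B m j := by
  simp only [Matrix.mul_apply, mul_sum]
  exact sum_comm

lemma sum_abs_mul_apply_sub_mul_apply_le {A A' B B' : Matrix J J ℝ} (hA' : ∀ m j, 0 ≤ A' m j)
    (hB : ∀ m j, 0 ≤ B m j) (i : J) :
    ∑ j, |(A * B) i j - (A' * B') i j|
      ≤ ∑ m, |A i m - A' i m| * ∑ j, B m j + ∑ m, A' i m * ∑ j, |B m j - B' m j| := by
  have hentry : ∀ j, |(A * B) i j - (A' * B') i j|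
      ≤ ∑ m, (|A i m - A' i m| * B m j + A' i m * |B m j - B' m j|) := by
    intro j
    rw [Matrix.mul_apply, Matrix.mul_apply, ← sum_sub_distrib]
    refine (abs_sum_le_sum_abs _ _).trans (sum_le_sum fun m _ => ?_)
    rw [show A i m * B m j - A' i m * B' m j
        = (A i m - A' i m) * B m j + A' i m * (B m j - B' m j) by ring]
    refine (abs_add_le _ _).trans_eq ?_
    rw [abs_mul, abs_mul, abs_of_nonneg (hB m j), abs_of_nonneg (hA' i m)]
  refine (sum_le_sum fun j _ => hentry j).trans_eq ?_
  rw [sum_comm, ← sum_add_distrib]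
  simp only [sum_add_distrib, mul_sum]

variable [DecidableEq J]

lemma sum_offdiagPart_add_sum_diagPart (M : Matrix J J ℝ) (m : J) :
    ∑ j, offdiagPart M m j + ∑ j, diagPart M m j = ∑ j, M m j := by
  rw [← sum_add_distrib]
  refine sum_congr rfl fun j _ => ?_
  rw [offdiagPart_apply, diagPart_apply]
  split_ifs <;> ring

lemma sum_abs_offdiagPart_sub_add_sum_abs_diagPart_sub (M M' : Matrix J J ℝ) (m : J) :
    ∑ j, |offdiagPart M m j - offdiagPart M' m j| + ∑ j, |diagPart M m j - diagPart M' m j|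
      = ∑ j, |M m j - M' m j| := by
  rw [← sum_add_distrib]
  refine sum_congr rfl fun j _ => ?_
  rw [offdiagPart_apply, offdiagPart_apply, diagPart_apply, diagPart_apply]
  split_ifs <;> simp

end Matrix

section PiRec

variable {J : Type*} [Fintype J] [DecidableEq J] {Q Q' : ℕ → ℕ → Matrix J J ℝ}

lemma PiRec_zero_zero : PiRec Q 0 0 = 1 := rfl

lemma PiRec_succ_zero (k : ℕ) :
    PiRec Q (k + 1) 0 = ∑ k' ∈ range (k + 1), PiRec Q k k' * offdiagPart (Q k k') := rfl

lemma PiRec_succ_succ {k v : ℕ} (h : v ≤ k) :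
    PiRec Q (k + 1) (v + 1) = PiRec Q k v * diagPart (Q k v) := by
  simp [PiRec, h]

lemma PiRec_of_lt {k v : ℕ} (h : k < v) : PiRec Q k v = 0 := by
  cases k with
  | zero => simp [PiRec, h.ne']
  | succ k => simp [PiRec, (Nat.zero_lt_of_lt h).ne', Nat.not_le.mpr h]

lemma PiRec_nonneg (hQ : ∀ ℓ w, w ≤ ℓ → ∀ i j, 0 ≤ Q ℓ w i j) (k v : ℕ) (i j : J) :
    0 ≤ PiRec Q k v i j := by
  induction k generalizing v i j with
  | zero =>
    rcases v with _ | v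
    · rw [PiRec_zero_zero, Matrix.one_apply]
      split_ifs <;> norm_num
    · rw [PiRec_of_lt v.succ_pos]
      rfl
  | succ k ih =>
    rcases v with _ | v
    · rw [PiRec_succ_zero, Matrix.sum_apply]
      refine sum_nonneg fun k' hk' => ?_
      rw [Matrix.mul_apply]
      exact sum_nonneg fun m _ => mul_nonneg (ih k' i m)
        (offdiagPart_nonneg (hQ k k' (Nat.lt_succ_iff.mp (mem_range.mp hk'))) m j)
    · rcases le_or_gt v k with hv | hv
      · rw [PiRec_succ_succ hv, Matrix.mul_apply]
        exact sum_nonneg fun m _ => mul_nonneg (ih v i m) (diagPart_nonneg (hQ k v hv) m j)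
      · rw [PiRec_of_lt (by omega)]
        rfl

lemma sum_sum_PiRec_succ (k : ℕ) (i : J) :
    ∑ v ∈ range (k + 2), ∑ j, PiRec Q (k + 1) v i j
      = ∑ v ∈ range (k + 1), ∑ m, PiRec Q k v i m * ∑ j, Q k v m j := by
  rw [sum_range_succ', PiRec_succ_zero]
  have hdiag : ∀ v ∈ range (k + 1), ∑ j, PiRec Q (k + 1) (v + 1) i j
      = ∑ m, PiRec Q k v i m * ∑ j, diagPart (Q k v) m j := fun v hv => by
    rw [PiRec_succ_succ (Nat.lt_succ_iff.mp (mem_range.mp hv)), sum_mul_apply]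
  have hoffdiag : ∑ j, (∑ k' ∈ range (k + 1), PiRec Q k k' * offdiagPart (Q k k')) i j
      = ∑ v ∈ range (k + 1), ∑ m, PiRec Q k v i m * ∑ j, offdiagPart (Q k v) m j := by
    simp only [Matrix.sum_apply]
    rw [sum_comm]
    exact sum_congr rfl fun v _ => sum_mul_apply _ _ i
  rw [sum_congr rfl hdiag, hoffdiag, ← sum_add_distrib]
  refine sum_congr rfl fun v _ => ?_
  rw [← sum_add_distrib]
  refine sum_congr rfl fun m _ => ?_
  rw [← mul_add, add_comm, sum_offdiagPart_add_sum_diagPart]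

lemma sum_sum_PiRec_le_one (hQ : ∀ ℓ w, w ≤ ℓ → RowSubstochastic (Q ℓ w)) (k : ℕ) (i : J) :
    ∑ v ∈ range (k + 1), ∑ j, PiRec Q k v i j ≤ 1 := by
  induction k generalizing i with
  | zero => simp [PiRec_zero_zero, Matrix.one_apply]
  | succ k ih =>
    rw [sum_sum_PiRec_succ]
    refine (sum_le_sum fun v hv => sum_le_sum fun m _ => ?_).trans (ih i)
    exact mul_le_of_le_one_right (PiRec_nonneg (fun ℓ w h => (hQ ℓ w h).1) k v i m)
      ((hQ k v (Nat.lt_succ_iff.mp (mem_range.mp hv))).2 m)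

lemma abs_PiRec_apply_le_one (hQ : ∀ ℓ w, w ≤ ℓ → RowSubstochastic (Q ℓ w)) {k v : ℕ}
    (hv : v ≤ k) (i j : J) : |PiRec Q k v i j| ≤ 1 := by
  have hPi := PiRec_nonneg fun ℓ w h => (hQ ℓ w h).1
  rw [abs_of_nonneg (hPi k v i j)]
  calc PiRec Q k v i j ≤ ∑ j, PiRec Q k v i j :=
        single_le_sum (fun m _ => hPi k v i m) (mem_univ j)
    _ ≤ ∑ v ∈ range (k + 1), ∑ j, PiRec Q k v i j :=
        single_le_sum (f := fun v => ∑ j, PiRec Q k v i j)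
          (fun v _ => sum_nonneg fun m _ => hPi k v i m) (mem_range.mpr (Nat.lt_succ_of_le hv))
    _ ≤ 1 := sum_sum_PiRec_le_one hQ k i

end PiRec

section Comparison

variable {J : Type*} [Fintype J] [DecidableEq J] {Q Q' : ℕ → ℕ → Matrix J J ℝ}

lemma sum_sum_abs_PiRec_succ_sub_le (hQ : ∀ ℓ w, w ≤ ℓ → ∀ i j, 0 ≤ Q ℓ w i j)
    (hQ' : ∀ ℓ w, w ≤ ℓ → ∀ i j, 0 ≤ Q' ℓ w i j) (k : ℕ) (i : J) :
    ∑ v ∈ range (k + 2), ∑ j, |PiRec Q (k + 1) v i j - PiRec Q' (k + 1) v i j|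
      ≤ ∑ v ∈ range (k + 1), (∑ m, |PiRec Q k v i m - PiRec Q' k v i m| * ∑ j, Q k v m j
          + ∑ m, PiRec Q' k v i m * ∑ j, |Q k v m j - Q' k v m j|) := by
  have hPi' := PiRec_nonneg hQ'
  rw [sum_range_succ', PiRec_succ_zero, PiRec_succ_zero]
  have hdiag : ∀ v ∈ range (k + 1),
      ∑ j, |PiRec Q (k + 1) (v + 1) i j - PiRec Q' (k + 1) (v + 1) i j|
        ≤ ∑ m, |PiRec Q k v i m - PiRec Q' k v i m| * ∑ j, diagPart (Q k v) m j
          + ∑ m, PiRec Q' k v i m * ∑ j, |diagPart (Q k v) m j - diagPart (Q' k v) m j| := by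
    intro v hv
    have hvk := Nat.lt_succ_iff.mp (mem_range.mp hv)
    rw [PiRec_succ_succ hvk, PiRec_succ_succ hvk]
    exact sum_abs_mul_apply_sub_mul_apply_le (hPi' k v) (diagPart_nonneg (hQ k v hvk)) i
  have hoffdiag : ∑ j, |(∑ v ∈ range (k + 1), PiRec Q k v * offdiagPart (Q k v)) i j
        - (∑ v ∈ range (k + 1), PiRec Q' k v * offdiagPart (Q' k v)) i j|
      ≤ ∑ v ∈ range (k + 1), (∑ m, |PiRec Q k v i m - PiRec Q' k v i m|
            * ∑ j, offdiagPart (Q k v) m j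
          + ∑ m, PiRec Q' k v i m
            * ∑ j, |offdiagPart (Q k v) m j - offdiagPart (Q' k v) m j|) := by
    calc _ ≤ ∑ j, ∑ v ∈ range (k + 1), |(PiRec Q k v * offdiagPart (Q k v)) i j
            - (PiRec Q' k v * offdiagPart (Q' k v)) i j| := by
          refine sum_le_sum fun j _ => ?_
          rw [Matrix.sum_apply, Matrix.sum_apply, ← sum_sub_distrib]
          exact abs_sum_le_sum_abs _ _
      _ = _ := sum_comm
      _ ≤ _ := sum_le_sum fun v hv => sum_abs_mul_apply_sub_mul_apply_le (hPi' k v)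
          (offdiagPart_nonneg (hQ k v (Nat.lt_succ_iff.mp (mem_range.mp hv)))) i
  refine (add_le_add (sum_le_sum hdiag) hoffdiag).trans_eq ?_
  rw [← sum_add_distrib]
  refine sum_congr rfl fun v _ => ?_
  simp only [← sum_abs_offdiagPart_sub_add_sum_abs_diagPart_sub (Q k v) (Q' k v),
    ← sum_offdiagPart_add_sum_diagPart (Q k v), mul_add, sum_add_distrib]
  ring

lemma sum_sum_abs_PiRec_sub_le (hQ : ∀ ℓ w, w ≤ ℓ → RowSubstochastic (Q ℓ w))
    (hQ' : ∀ ℓ w, w ≤ ℓ → RowSubstochastic (Q' ℓ w)) {c : ℝ} (hc : 0 ≤ c) (k : ℕ)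
    (hk : ∀ ℓ < k, ∀ w ≤ ℓ, ∀ m, ∑ j, |Q ℓ w m j - Q' ℓ w m j| ≤ c) (i : J) :
    ∑ v ∈ range (k + 1), ∑ j, |PiRec Q k v i j - PiRec Q' k v i j| ≤ k * c := by
  induction k generalizing i with
  | zero => simp [PiRec_zero_zero]
  | succ k ih =>
    have hPi' := PiRec_nonneg fun ℓ w h => (hQ' ℓ w h).1
    refine (sum_sum_abs_PiRec_succ_sub_le (fun ℓ w h => (hQ ℓ w h).1)
      (fun ℓ w h => (hQ' ℓ w h).1) k i).trans ?_
    calc _ ≤ ∑ v ∈ range (k + 1), (∑ m, |PiRec Q k v i m - PiRec Q' k v i m|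
            + c * ∑ m, PiRec Q' k v i m) := by
          refine sum_le_sum fun v hv => add_le_add (sum_le_sum fun m _ => ?_) ?_
          · exact mul_le_of_le_one_right (abs_nonneg _)
              ((hQ k v (Nat.lt_succ_iff.mp (mem_range.mp hv))).2 m)
          · rw [mul_sum]
            refine sum_le_sum fun m _ => ?_
            rw [mul_comm c]
            exact mul_le_mul_of_nonneg_left
              (hk k k.lt_succ_self v (Nat.lt_succ_iff.mp (mem_range.mp hv)) m) (hPi' k v i m)
      _ ≤ k * c + c * 1 := by
          rw [sum_add_distrib, ← mul_sum]
          exact add_le_add (ih (fun ℓ hℓ => hk ℓ (hℓ.trans k.lt_succ_self)) i)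
            (mul_le_mul_of_nonneg_left (sum_sum_PiRec_le_one hQ' k i) hc)
      _ = (k + 1 : ℕ) * c := by push_cast; ring

lemma sum_sum_abs_PiRec_sub_le_two (hQ : ∀ ℓ w, w ≤ ℓ → RowSubstochastic (Q ℓ w))
    (hQ' : ∀ ℓ w, w ≤ ℓ → RowSubstochastic (Q' ℓ w)) (k : ℕ) (i : J) :
    ∑ v ∈ range (k + 1), ∑ j, |PiRec Q k v i j - PiRec Q' k v i j| ≤ 2 :=
  calc _ ≤ ∑ v ∈ range (k + 1), ∑ j, (PiRec Q k v i j + PiRec Q' k v i j) :=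
        sum_le_sum fun v _ => sum_le_sum fun j _ => abs_sub_le_add_of_nonneg
          (PiRec_nonneg (fun ℓ w h => (hQ ℓ w h).1) k v i j)
          (PiRec_nonneg (fun ℓ w h => (hQ' ℓ w h).1) k v i j)
    _ ≤ 2 := by
        simp only [sum_add_distrib]
        linarith [sum_sum_PiRec_le_one hQ k i, sum_sum_PiRec_le_one hQ' k i]

end Comparison

section Cconst

variable {J : Type*} [Fintype J] {Q Q' : ℕ → ℕ → Matrix J J ℝ}

lemma Cconst_nonneg (Q Q' : ℕ → ℕ → Matrix J J ℝ) (k : ℕ) : 0 ≤ Cconst Q Q' k :=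
  Real.sSup_nonneg (by rintro _ ⟨ℓ, w, i, -, -, rfl⟩; positivity)

lemma sum_abs_sub_le_Cconst (hQ : ∀ ℓ w, w ≤ ℓ → RowSubstochastic (Q ℓ w))
    (hQ' : ∀ ℓ w, w ≤ ℓ → RowSubstochastic (Q' ℓ w)) {k ℓ w : ℕ} (hℓ : ℓ < k) (hw : w ≤ ℓ)
    (i : J) : ∑ j, |Q ℓ w i j - Q' ℓ w i j| ≤ Cconst Q Q' k := by
  refine le_csSup ⟨2, ?_⟩ ⟨ℓ, w, i, hw, hℓ, rfl⟩
  rintro _ ⟨ℓ, w, i, hw, -, rfl⟩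
  exact (hQ ℓ w hw).sum_abs_sub_le_two (hQ' ℓ w hw) i

end Cconst

section PCont

variable {J : Type*} [Fintype J] {Pi Pi' : ℕ → ℕ → Matrix J J ℝ} {γ s : ℝ}

lemma abs_tsum_sub_tsum_le {u u' d : ℕ → ℝ} (hu : Summable u) (hu' : Summable u')
    (hd : Summable d) (h : ∀ n, |u n - u' n| ≤ d n) : |∑' n, u n - ∑' n, u' n| ≤ ∑' n, d n := by
  rw [← hu.tsum_sub hu']
  exact tsum_of_norm_bounded (f := fun n => u n - u' n) hd.hasSum h

lemma summable_sum_Erl_mul_Poi_mul {x M : ℝ} (hγ : 0 ≤ γ) (hx : 0 ≤ x) (hxs : x ≤ s)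
    {a : ℕ → ℕ → ℝ} (ha : ∀ ℓ w, w < ℓ → |a ℓ w| ≤ M) :
    Summable fun ℓ => ∑ w ∈ range ℓ, Erl (ℓ - w) γ (s - x) * Poi (γ * x) w * a ℓ w := by
  refine ((summable_sum_Erl_mul_Poi γ s x).mul_right M).of_norm_bounded fun ℓ => ?_
  rw [sum_mul]
  refine (norm_sum_le _ _).trans (sum_le_sum fun w hw => ?_)
  rw [norm_mul, Real.norm_of_nonneg (mul_nonneg (Erl_nonneg hγ (by linarith) _)
    (Poi_nonneg (mul_nonneg hγ hx) _))]
  exact mul_le_mul_of_nonneg_left (ha ℓ w (mem_range.mp hw))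
    (mul_nonneg (Erl_nonneg hγ (by linarith) _) (Poi_nonneg (mul_nonneg hγ hx) _))

lemma sum_abs_pCont_sub_le {x : ℝ} (hγ : 0 ≤ γ) (hx : 0 ≤ x) (hxs : x ≤ s) {i : J}
    (hPi : ∀ ℓ w, w < ℓ → ∀ j, |Pi ℓ w i j| ≤ 1) (hPi' : ∀ ℓ w, w < ℓ → ∀ j, |Pi' ℓ w i j| ≤ 1) :
    ∑ j, |pCont γ Pi s x i j - pCont γ Pi' s x i j|
      ≤ ∑' ℓ, ∑ w ∈ range ℓ, Erl (ℓ - w) γ (s - x) * Poi (γ * x) w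
          * ∑ j, |Pi ℓ w i j - Pi' ℓ w i j| := by
  have hc : ∀ ℓ w, 0 ≤ Erl (ℓ - w) γ (s - x) * Poi (γ * x) w := fun ℓ w =>
    mul_nonneg (Erl_nonneg hγ (by linarith) _) (Poi_nonneg (mul_nonneg hγ hx) _)
  have hdiff : ∀ j, Summable fun ℓ => ∑ w ∈ range ℓ,
      Erl (ℓ - w) γ (s - x) * Poi (γ * x) w * |Pi ℓ w i j - Pi' ℓ w i j| := fun j =>
    summable_sum_Erl_mul_Poi_mul hγ hx hxs (M := 2) fun ℓ w hw => by
      rw [abs_abs]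
      linarith [abs_sub (Pi ℓ w i j) (Pi' ℓ w i j), hPi ℓ w hw j, hPi' ℓ w hw j]
  calc ∑ j, |pCont γ Pi s x i j - pCont γ Pi' s x i j|
      ≤ ∑ j, ∑' ℓ, ∑ w ∈ range ℓ,
          Erl (ℓ - w) γ (s - x) * Poi (γ * x) w * |Pi ℓ w i j - Pi' ℓ w i j| := by
        refine sum_le_sum fun j _ => abs_tsum_sub_tsum_le
          (summable_sum_Erl_mul_Poi_mul hγ hx hxs fun ℓ w hw => hPi ℓ w hw j)
          (summable_sum_Erl_mul_Poi_mul hγ hx hxs fun ℓ w hw => hPi' ℓ w hw j) (hdiff j)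
          fun ℓ => ?_
        rw [← sum_sub_distrib]
        refine (abs_sum_le_sum_abs _ _).trans_eq (sum_congr rfl fun w _ => ?_)
        rw [← mul_sub, abs_mul, abs_of_nonneg (hc ℓ w)]
    _ = ∑' ℓ, ∑ w ∈ range ℓ, Erl (ℓ - w) γ (s - x) * Poi (γ * x) w
          * ∑ j, |Pi ℓ w i j - Pi' ℓ w i j| := by
        rw [← (Summable.tsum_finsetSum fun j _ => hdiff j)]
        refine tsum_congr fun ℓ => ?_
        simp only [mul_sum]
        exact sum_comm

lemma integral_sum_Erl_mul_Poi_mul_le {v : ℝ} (hγ : 0 ≤ γ) (hv : 0 ≤ v) (hvs : v ≤ s)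
    {d : ℕ → ℝ} (hd : ∀ w, 0 ≤ d w) (ℓ : ℕ) :
    ∫ x in (0 : ℝ)..v, ∑ w ∈ range ℓ, Erl (ℓ - w) γ (s - x) * Poi (γ * x) w * d w
      ≤ Poi (γ * s) ℓ * ∑ w ∈ range ℓ, d w := by
  rw [intervalIntegral.integral_finsetSum fun w _ =>
    (by unfold Erl Poi; fun_prop : Continuous fun x =>
      Erl (ℓ - w) γ (s - x) * Poi (γ * x) w * d w).intervalIntegrable 0 v, mul_sum]
  refine sum_le_sum fun w hw => ?_
  rw [intervalIntegral.integral_mul_const]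
  refine mul_le_mul_of_nonneg_right ?_ (hd w)
  obtain ⟨k, hk⟩ : ∃ k, ℓ = w + k + 1 := ⟨ℓ - w - 1, by have := mem_range.mp hw; omega⟩
  rw [hk, show w + k + 1 - w = k + 1 by omega]
  exact integral_Erl_succ_mul_Poi_le hγ hv hvs k w

end PCont

lemma integral_sum_abs_pCont_sub_le {J : Type*} [Fintype J] {Pi Pi' : ℕ → ℕ → Matrix J J ℝ}
    {γ v s M : ℝ} (hγ : 0 ≤ γ) (hv : 0 ≤ v) (hvs : v ≤ s) {i : J}
    (hPi : ∀ ℓ w, w < ℓ → ∀ j, |Pi ℓ w i j| ≤ 1) (hPi' : ∀ ℓ w, w < ℓ → ∀ j, |Pi' ℓ w i j| ≤ 1)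
    (hM : ∀ ℓ, ∑ w ∈ range ℓ, ∑ j, |Pi ℓ w i j - Pi' ℓ w i j| ≤ M) :
    ∫ x in (0 : ℝ)..v, ∑ j, |pCont γ Pi s x i j - pCont γ Pi' s x i j|
      ≤ ∑' ℓ, Poi (γ * s) ℓ * ∑ w ∈ range ℓ, ∑ j, |Pi ℓ w i j - Pi' ℓ w i j| := by
  set D : ℕ → ℕ → ℝ := fun ℓ w => ∑ j, |Pi ℓ w i j - Pi' ℓ w i j|
  have hD : ∀ ℓ w, 0 ≤ D ℓ w := fun ℓ w => sum_nonneg fun j _ => abs_nonneg _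
  have hmem : ∀ x ∈ Set.Ioc 0 v, 0 ≤ x ∧ x ≤ s := fun x hx => ⟨hx.1.le, hx.2.trans hvs⟩
  rw [intervalIntegral.integral_of_le hv]
  refine integral_le_tsum_of_abs_le_tsum
    (g := fun ℓ x => ∑ w ∈ range ℓ, Erl (ℓ - w) γ (s - x) * Poi (γ * x) w * D ℓ w)
    (fun ℓ => Continuous.integrableOn_Ioc (by unfold Erl Poi; fun_prop)) (fun ℓ => ?_) ?_
    (fun ℓ => ?_) ?_
  · filter_upwards [MeasureTheory.ae_restrict_mem measurableSet_Ioc] with x hx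
    obtain ⟨hx, hxs⟩ := hmem x hx
    exact sum_nonneg fun w _ => mul_nonneg (mul_nonneg (Erl_nonneg hγ (by linarith) _)
      (Poi_nonneg (mul_nonneg hγ hx) _)) (hD ℓ w)
  · filter_upwards [MeasureTheory.ae_restrict_mem measurableSet_Ioc] with x hx
    obtain ⟨hx, hxs⟩ := hmem x hx
    rw [abs_of_nonneg (sum_nonneg fun j _ => abs_nonneg _)]
    exact sum_abs_pCont_sub_le hγ hx hxs hPi hPi'
  · rw [← intervalIntegral.integral_of_le hv]
    exact integral_sum_Erl_mul_Poi_mul_le hγ hv hvs (hD ℓ) ℓ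
  · have hPoi := Poi_nonneg (mul_nonneg hγ (hv.trans hvs))
    exact ((summable_Poi (γ * s)).mul_right M).of_nonneg_of_le
      (fun ℓ => mul_nonneg (hPoi ℓ) (sum_nonneg fun w _ => hD ℓ w))
      fun ℓ => mul_le_mul_of_nonneg_left (hM ℓ) (hPoi ℓ)

lemma tsum_Poi_mul_le {lam C M : ℝ} (hlam : 0 ≤ lam) (hC : 0 ≤ C) {t : ℕ → ℝ}
    (ht : ∀ ℓ, 0 ≤ t ℓ) (htM : ∀ ℓ, t ℓ ≤ M) (N : ℕ) (htC : ∀ ℓ ≤ N, t ℓ ≤ ℓ * C) :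
    ∑' ℓ, Poi lam ℓ * t ℓ ≤ lam * C + M * ∑' ℓ, Poi lam (N + 1 + ℓ) := by
  have hPoi := Poi_nonneg hlam
  have hsum : Summable fun ℓ => Poi lam ℓ * t ℓ :=
    ((summable_Poi lam).mul_right M).of_nonneg_of_le (fun ℓ => mul_nonneg (hPoi ℓ) (ht ℓ))
      fun ℓ => mul_le_mul_of_nonneg_left (htM ℓ) (hPoi ℓ)
  rw [← hsum.sum_add_tsum_nat_add (N + 1)]
  refine add_le_add ?_ ?_
  · calc ∑ ℓ ∈ range (N + 1), Poi lam ℓ * t ℓ ≤ ∑ ℓ ∈ range (N + 1), (ℓ : ℝ) * Poi lam ℓ * C :=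
          sum_le_sum fun ℓ hℓ => by
            rw [mul_comm (ℓ : ℝ), mul_assoc]
            exact mul_le_mul_of_nonneg_left (htC ℓ (Nat.lt_succ_iff.mp (mem_range.mp hℓ)))
              (hPoi ℓ)
      _ ≤ lam * C := by
          rw [← sum_mul]
          exact mul_le_mul_of_nonneg_right (sum_range_mul_Poi_le hlam _) hC
  · rw [← tsum_mul_left]
    refine ((summable_nat_add_iff (N + 1)).mpr hsum).tsum_le_tsum (fun ℓ => ?_)
      (((summable_nat_add_iff (N + 1)).mpr (summable_Poi lam)).mul_left M |>.congr
        fun ℓ => by rw [add_comm ℓ])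
    rw [mul_comm M, add_comm (N + 1)]
    exact mul_le_mul_of_nonneg_left (htM _) (hPoi _)

theorem pCont_difference_integral_bound_general
    {J : Type*} [Fintype J] [DecidableEq J]
    (Q Q' : ℕ → ℕ → Matrix J J ℝ)
    (hQ : ∀ ℓ w, w ≤ ℓ → RowSubstochastic (Q ℓ w))
    (hQ' : ∀ ℓ w, w ≤ ℓ → RowSubstochastic (Q' ℓ w))
    (γ : ℝ) (hγ : 0 < γ) (v s : ℝ) (hv : 0 ≤ v) (hvs : v ≤ s) (i : J) (N : ℕ) :
    (∫ v' in (0:ℝ)..v,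
        ∑ j, |pCont γ (PiRec Q) s v' i j - pCont γ (PiRec Q') s v' i j|) ≤
      γ * s * Cconst Q Q' N + 2 * ∑' ℓ : ℕ, Poi (γ * s) (N + 1 + ℓ) := by
  set T : ℕ → ℝ := fun ℓ => ∑ w ∈ range ℓ, ∑ j, |PiRec Q ℓ w i j - PiRec Q' ℓ w i j|
  have hT_le_sum_succ : ∀ ℓ, T ℓ
      ≤ ∑ w ∈ range (ℓ + 1), ∑ j, |PiRec Q ℓ w i j - PiRec Q' ℓ w i j| := fun ℓ =>
    sum_le_sum_of_subset_of_nonneg (range_subset_range.mpr ℓ.le_succ)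
      fun w _ _ => sum_nonneg fun j _ => abs_nonneg _
  have hT_two : ∀ ℓ, T ℓ ≤ 2 := fun ℓ =>
    (hT_le_sum_succ ℓ).trans (sum_sum_abs_PiRec_sub_le_two hQ hQ' ℓ i)
  have hT_Cconst : ∀ ℓ ≤ N, T ℓ ≤ ℓ * Cconst Q Q' N := fun ℓ hℓ =>
    (hT_le_sum_succ ℓ).trans (sum_sum_abs_PiRec_sub_le hQ hQ' (Cconst_nonneg Q Q' N) ℓ
      (fun ℓ' hℓ' w hw m => sum_abs_sub_le_Cconst hQ hQ' (hℓ'.trans_le hℓ) hw m) i)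
  calc _ ≤ ∑' ℓ, Poi (γ * s) ℓ * T ℓ :=
        integral_sum_abs_pCont_sub_le hγ.le hv hvs
          (fun ℓ w hw j => abs_PiRec_apply_le_one hQ hw.le i j)
          (fun ℓ w hw j => abs_PiRec_apply_le_one hQ' hw.le i j) hT_two
    _ ≤ _ := tsum_Poi_mul_le (mul_nonneg hγ.le (hv.trans hvs)) (Cconst_nonneg Q Q' N)
        (fun ℓ => sum_nonneg fun w _ => sum_nonneg fun j _ => abs_nonneg _) hT_two N hT_Cconst

theorem pCont_difference_integral_bound
    {J : Type*} [Fintype J] [DecidableEq J] [Nonempty J]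
    (Q Q' : ℕ → ℕ → Matrix J J ℝ)
    (hQ : ∀ ℓ w, w ≤ ℓ → RowSubstochastic (Q ℓ w))
    (hQ' : ∀ ℓ w, w ≤ ℓ → RowSubstochastic (Q' ℓ w))
    (γ : ℝ) (hγ : 0 < γ) (v s : ℝ) (hv : 0 ≤ v) (hvs : v ≤ s) (i : J) (N : ℕ) :
    (∫ v' in (0:ℝ)..v,
        ∑ j, |pCont γ (PiRec Q) s v' i j - pCont γ (PiRec Q') s v' i j|) ≤
      γ * s * Cconst Q Q' N + 2 * ∑' ℓ : ℕ, Poi (γ * s) (N + 1 + ℓ) :=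
  pCont_difference_integral_bound_general Q Q' hQ hQ' γ hγ v s hv hvs i N
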